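/- arXiv:1012.0679 — 3 statements merged into one kernel-verified Lean document; each statement's English description precedes it below -/
import Mathlib

section
/- Let A be a real symmetric n×n matrix with all eigenvalues in [-1, 1]. If n ≥ 2, m ≥ 3 are integers with n ≤ m and the quantity -2·trace(A²) + (trace A)² - 2(m-n)·trace(A) - n(2m - n - 2) is ≥ 0, then either A = -Id, or A = Id and n = m. -/
/-!
Diagonalize `A`: with `t = Σ λᵢ = tr A` and `s = Σ λᵢ² = tr A²`, Cauchy–Schwarz `t² ≤ n s` turns
`n` times the hypothesis into `0 ≤ (t + n)((n - 2)(t - n) - 2n(m - n))`. Since `-n ≤ t ≤ n`, either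
`t = -n`, or the second factor is nonnegative, which forces `m = n` and then (as `n = m ≥ 3`)
`t = n`. A trace of `∓n` with all eigenvalues in `[-1, 1]` makes every eigenvalue `∓1`, so
`A = ∓1`.
-/

open Finset Matrix Module.End

theorem eq_neg_or_eq_of_stability_ineq {n m t s : ℝ} (hn : 2 ≤ n) (hm : 3 ≤ m) (hnm : n ≤ m)
    (hts : t ^ 2 ≤ n * s) (ht : t ∈ Set.Icc (-n) n)
    (h : 0 ≤ -2 * s + t ^ 2 - 2 * (m - n) * t - n * (2 * m - n - 2)) :
    t = -n ∨ (t = n ∧ m = n) := by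
  have key : 0 ≤ (t + n) * ((n - 2) * (t - n) - 2 * n * (m - n)) := by
    nlinarith [mul_nonneg (by linarith : (0 : ℝ) ≤ n) h]
  rcases ht.1.eq_or_lt with h_eq | h_lt
  · exact .inl h_eq.symm
  have hfac := nonneg_of_mul_nonneg_right key (by linarith)
  have hmn : m = n := by nlinarith [mul_nonneg (sub_nonneg.2 hn) (sub_nonneg.2 ht.2)]
  subst hmn
  exact .inr ⟨by nlinarith [ht.2], rfl⟩

namespace Matrix.IsHermitian

variable {𝕜 ι : Type*} [RCLike 𝕜] [Fintype ι] [DecidableEq ι] {A : Matrix ι ι 𝕜}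

theorem hasEigenvalue_eigenvalues (hA : A.IsHermitian) (i : ι) :
    HasEigenvalue (toLin' A) (hA.eigenvalues i : 𝕜) := by
  rw [hasEigenvalue_iff_mem_spectrum, spectrum_toLin', hA.spectrum_eq_image_range]
  exact ⟨_, ⟨i, rfl⟩, rfl⟩

theorem trace_mul_self (hA : A.IsHermitian) :
    (A * A).trace = ∑ i, (hA.eigenvalues i : 𝕜) ^ 2 := by
  conv_lhs => rw [hA.spectral_theorem]
  rw [← map_mul, Unitary.conjStarAlgAut_apply, trace_mul_cycle,
    Unitary.coe_star_mul_self, one_mul, diagonal_mul_diagonal, trace_diagonal]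
  simp [sq]

theorem eq_algebraMap_of_eigenvalues_eq (hA : A.IsHermitian) {c : ℝ}
    (h : ∀ i, hA.eigenvalues i = c) : A = algebraMap 𝕜 (Matrix ι ι 𝕜) c := by
  have hdiag :
      diagonal (RCLike.ofReal ∘ hA.eigenvalues) = algebraMap 𝕜 (Matrix ι ι 𝕜) c := by
    rw [funext h, algebraMap_eq_diagonal]; rfl
  conv_lhs => rw [hA.spectral_theorem, hdiag]
  exact AlgHomClass.commutes (Unitary.conjStarAlgAut 𝕜 _ hA.eigenvectorUnitary) (c : 𝕜)

end Matrix.IsHermitian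

/-- Let `A` be a real symmetric `n×n` matrix with all eigenvalues in `[-1,1]`,
`n ≥ 2`, `m ≥ 3`, `n ≤ m`. If
`-2·trace(A²) + (trace A)² - 2(m-n)·trace A - n(2m - n - 2) ≥ 0`,
then `A = -Id`, or `A = Id` and `n = m`. -/
theorem stmt7 (n m : ℕ) (hn : 2 ≤ n) (hm : 3 ≤ m) (hnm : n ≤ m)
    (A : Matrix (Fin n) (Fin n) ℝ) (hA : A.IsSymm)
    (heig : ∀ μ : ℝ, Module.End.HasEigenvalue (Matrix.toLin' A) μ → μ ∈ Set.Icc (-1 : ℝ) 1)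
    (hineq : 0 ≤ -2 * (A * A).trace + A.trace ^ 2
      - 2 * ((m : ℝ) - n) * A.trace - n * (2 * m - n - 2)) :
    A = -1 ∨ (A = 1 ∧ n = m) := by
  have hH : A.IsHermitian := isHermitian_iff_isSymm.2 hA
  set lam := hH.eigenvalues
  have hlam (i : Fin n) : lam i ∈ Set.Icc (-1 : ℝ) 1 := heig _ (hH.hasEigenvalue_eigenvalues i)
  have hlo : ∑ _i : Fin n, (-1 : ℝ) ≤ ∑ i, lam i := sum_le_sum fun i _ => (hlam i).1
  have hhi : ∑ i, lam i ≤ ∑ _i : Fin n, (1 : ℝ) := sum_le_sum fun i _ => (hlam i).2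
  have hCS : (∑ i, lam i) ^ 2 ≤ n * ∑ i, lam i ^ 2 := by
    simpa using sq_sum_le_card_mul_sum_sq (s := univ) (f := lam)
  rw [show A.trace = ∑ i, lam i by simpa using hH.trace_eq_sum_eigenvalues,
    show (A * A).trace = ∑ i, lam i ^ 2 by simpa using hH.trace_mul_self] at hineq
  rcases eq_neg_or_eq_of_stability_ineq (by exact_mod_cast hn) (by exact_mod_cast hm)
    (by exact_mod_cast hnm) hCS ⟨by simpa using hlo, by simpa using hhi⟩ hineq with
    h | ⟨h, hmn⟩
  · have hlam_eq (i : Fin n) : lam i = -1 :=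
      ((sum_eq_sum_iff_of_le fun i _ => (hlam i).1).1 (by simpa using h.symm) i
        (mem_univ i)).symm
    exact .inl (by simpa using hH.eq_algebraMap_of_eigenvalues_eq hlam_eq)
  · have hlam_eq (i : Fin n) : lam i = 1 :=
      (sum_eq_sum_iff_of_le fun i _ => (hlam i).2).1 (by simpa using h) i (mem_univ i)
    exact .inr ⟨by simpa using hH.eq_algebraMap_of_eigenvalues_eq hlam_eq,
      by exact_mod_cast hmn.symm⟩
end

section
/- Let be a real symmetric m×m matrix with all eigenvalues in [-1,1], m ≥ 3. If -2·trace(²) + (trace Â)² - m(m-2) ≥ 0, then = Id or = -Id. -/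
/-!
By Cauchy–Schwarz, `(tr A)² ≤ m · tr(Aᵀ A) = m · tr(A²)`, so the hypothesis gives
`(1 - 2/m) (tr A)² ≥ m (m - 2)`, i.e. `|tr A| ≥ m` since `m > 2`. If `tr A ≥ m`, then `1 - A`
is positive semidefinite (its spectrum is `1 - σ(A) ⊆ [0, ∞)`) with trace `≤ 0`, hence
`1 - A = 0`; the case `tr A ≤ -m` is the same argument applied to `-A`.
-/

namespace Matrix

variable {n : Type*} [Fintype n]

theorem sq_trace_le_card_mul_trace_transpose_mul_self (A : Matrix n n ℝ) :
    A.trace ^ 2 ≤ Fintype.card n * (Aᵀ * A).trace := by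
  have hfrob : (Aᵀ * A).trace = ∑ i, ∑ j, A j i ^ 2 := by
    simp only [trace, diag, mul_apply, transpose_apply, sq]
  have hdiag : ∑ i, A i i ^ 2 ≤ ∑ i, ∑ j, A j i ^ 2 := Finset.sum_le_sum fun i _ ↦
    Finset.single_le_sum (f := fun j ↦ A j i ^ 2) (fun j _ ↦ sq_nonneg _) (Finset.mem_univ i)
  calc A.trace ^ 2 = (∑ i, A i i) ^ 2 := rfl
    _ ≤ Fintype.card n * ∑ i, A i i ^ 2 := by
      simpa using sq_sum_le_card_mul_sum_sq (s := Finset.univ) (f := fun i ↦ A i i)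
    _ ≤ Fintype.card n * (Aᵀ * A).trace := by rw [hfrob]; gcongr

variable [DecidableEq n]

theorem IsHermitian.eq_one_of_spectrum_le_one_of_card_le_trace {A : Matrix n n ℝ}
    (hA : A.IsHermitian) (hspec : ∀ μ ∈ spectrum ℝ A, μ ≤ 1)
    (htr : (Fintype.card n : ℝ) ≤ A.trace) : A = 1 := by
  have hpsd : (1 - A).PosSemidef := by
    refine posSemidef_iff_isHermitian_and_spectrum_nonneg.mpr
      ⟨isHermitian_one.sub hA, fun μ hμ ↦ ?_⟩
    rw [← map_one (algebraMap ℝ (Matrix n n ℝ)), ← spectrum.singleton_sub_eq] at hμ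
    obtain ⟨_, rfl, ν, hν, rfl⟩ := hμ
    exact sub_nonneg.mpr (hspec ν hν)
  have htr_zero : (1 - A).trace = 0 := by
    refine le_antisymm ?_ hpsd.trace_nonneg
    rw [trace_sub, trace_one]
    linarith
  exact (sub_eq_zero.mp (hpsd.trace_eq_zero_iff.mp htr_zero)).symm

end Matrix

/-- Let `Â` be a real symmetric `m×m` matrix with all eigenvalues in `[-1,1]`,
`m ≥ 3`. If `-2·trace(Â²) + (trace Â)² - m(m-2) ≥ 0`, then `Â = Id` or `Â = -Id`. -/
theorem stmt8 (m : ℕ) (hm : 3 ≤ m)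
    (A : Matrix (Fin m) (Fin m) ℝ) (hA : A.IsSymm)
    (heig : ∀ μ : ℝ, Module.End.HasEigenvalue (Matrix.toLin' A) μ → μ ∈ Set.Icc (-1 : ℝ) 1)
    (hineq : 0 ≤ -2 * (A * A).trace + A.trace ^ 2 - m * ((m : ℝ) - 2)) :
    A = 1 ∨ A = -1 := by
  have hH : A.IsHermitian := hA
  have hspec : ∀ μ ∈ spectrum ℝ A, μ ∈ Set.Icc (-1 : ℝ) 1 := fun μ hμ ↦
    heig μ (by rwa [Module.End.hasEigenvalue_iff_mem_spectrum, Matrix.spectrum_toLin'])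
  have hCS : A.trace ^ 2 ≤ m * (A * A).trace := by
    simpa [hA.eq] using A.sq_trace_le_card_mul_trace_transpose_mul_self
  have hm3 : (3 : ℝ) ≤ m := by exact_mod_cast hm
  have htr_sq : (m : ℝ) ^ 2 ≤ A.trace ^ 2 := by nlinarith
  have habs : (m : ℝ) ≤ |A.trace| := by simpa using sq_le_sq.mp htr_sq
  rcases le_abs'.mp habs with hneg | hpos
  · right
    refine neg_eq_iff_eq_neg.mp (hH.neg.eq_one_of_spectrum_le_one_of_card_le_trace ?_ ?_)
    · intro μ hμ
      rw [← spectrum.neg_eq] at hμ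
      simpa using neg_le.mp (hspec _ hμ).1
    · simpa using le_neg_of_le_neg hneg
  · left
    exact hH.eq_one_of_spectrum_le_one_of_card_le_trace (fun μ hμ ↦ (hspec μ hμ).2)
      (by simpa using hpos)
end

section
/- Let Σ₁, Σ₂ be sets with quadratic forms Q₁, Q₂ on spaces of sections, and Q defined on pairs by Q(η) = ∫_{Σ₁} Q₂((η₂)_p) dΣ₁ + ∫_{Σ₂} Q₁((η₁)_q) dΣ₂ (with Q(η_i) = Q_i(η_i)·vol(Σ_j) for sections depending on only one factor). If Q₁ ≥ 0 and Q₂ ≥ 0 then Q ≥ 0; conversely if Q ≥ 0 and the volumes of Σ₁, Σ₂ are positive and finite, then Q₁ ≥ 0 and Q₂ ≥ 0. -/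
open MeasureTheory

theorem integral_const_nonneg_iff {α : Type*} [MeasurableSpace α] (μ : Measure α)
    [IsFiniteMeasure μ] [NeZero μ] (c : ℝ) : 0 ≤ ∫ _ : α, c ∂μ ↔ 0 ≤ c := by
  rw [integral_const, smul_eq_mul]
  exact mul_nonneg_iff_of_pos_left measureReal_univ_pos

/-- Abstract version of "a product of minimal immersions is stable iff both factors are
stable". `Σ₁, Σ₂` are measure spaces of positive finite volume, `Q₁, Q₂` are the index
forms on sections over each factor (vanishing on the zero sections `z₁, z₂`), and the
index form of a general section `η = (f, g)` over the product is
`Q(η) = ∫_{Σ₁} Q₂(f p) + ∫_{Σ₂} Q₁(g q)`. Then `Q₁ ≥ 0` and `Q₂ ≥ 0` imply `Q ≥ 0`, and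
conversely. -/
theorem stmt14 {S₁ S₂ : Type*} [MeasureSpace S₁] [MeasureSpace S₂]
    [IsFiniteMeasure (volume : Measure S₁)] [IsFiniteMeasure (volume : Measure S₂)]
    (hpos₁ : 0 < (volume : Measure S₁) Set.univ)
    (hpos₂ : 0 < (volume : Measure S₂) Set.univ)
    {Γ₁ Γ₂ : Type*} (Q₁ : Γ₁ → ℝ) (Q₂ : Γ₂ → ℝ)
    (z₁ : Γ₁) (z₂ : Γ₂) (hz₁ : Q₁ z₁ = 0) (hz₂ : Q₂ z₂ = 0)
    (Q : (S₁ → Γ₂) × (S₂ → Γ₁) → ℝ)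
    (hQ : ∀ η : (S₁ → Γ₂) × (S₂ → Γ₁),
      Q η = (∫ p, Q₂ (η.1 p)) + ∫ q, Q₁ (η.2 q)) :
    ((∀ x, 0 ≤ Q₁ x) ∧ (∀ y, 0 ≤ Q₂ y)) ↔ (∀ η, 0 ≤ Q η) := by
  have : NeZero (volume : Measure S₁) := ⟨Measure.measure_univ_pos.mp hpos₁⟩
  have : NeZero (volume : Measure S₂) := ⟨Measure.measure_univ_pos.mp hpos₂⟩
  refine ⟨fun ⟨hQ₁, hQ₂⟩ η => ?_, fun h => ⟨fun x => ?_, fun y => ?_⟩⟩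
  · rw [hQ]
    exact add_nonneg (integral_nonneg fun p => hQ₂ _) (integral_nonneg fun q => hQ₁ _)
  · simpa only [hQ, hz₂, integral_zero, zero_add, integral_const_nonneg_iff]
      using h (fun _ => z₂, fun _ => x)
  · simpa only [hQ, hz₁, integral_zero, add_zero, integral_const_nonneg_iff]
      using h (fun _ => y, fun _ => z₁)
end
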